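/- For each λ ∈ Λ and each i, the operator θ_λ ∘ 𝔗_i − 𝔗_i ∘ θ_{s_i λ} preserves each summand M_w of 𝔐 and acts on M_w as multiplication by the scalar (v−1)·((wz)^λ − (wz)^{s_i λ}) / (1 − (wz)^{−α_i∨}). In particular the 𝔗_i and θ_λ satisfy the Bernstein relation of the affine Hecke algebra. (Theorem 1.2 of 'Hecke Modules from Metaplectic Ice'.) -/

import Mathlib

/-!
Both `θ_λ 𝔗_i` and `𝔗_i θ_{s_i λ}` send `φ` to the sum of a diagonal part and of the
part `A_i^{s_i w} φ_{s_i w}`. On the latter, `θ_λ` contributes `(wz)^λ` and `θ_{s_i λ}`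
contributes `((s_i w) z)^{s_i λ} = (wz)^λ`, so these parts cancel and only the diagonal
part `(1 − v)(wz)^{α_i} / (1 − (wz)^{α_i}) · ((wz)^λ − (wz)^{s_i λ})` survives. Since `z` is a
character, `(wz)^{−α_i} = ((wz)^{α_i})⁻¹`, which turns that scalar into the stated one.
-/

noncomputable section

/-- The group structure on `A ≃+ A` (composition), as `AddAut A` carried in the older Mathlib. -/
instance addEquivSelfGroup (A : Type*) [Add A] : Group (A ≃+ A) where
  mul g h := AddEquiv.trans h g
  one := AddEquiv.refl _
  inv := AddEquiv.symm
  mul_assoc _ _ _ := rfl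
  one_mul _ := rfl
  mul_one _ := rfl
  inv_mul_cancel := AddEquiv.self_trans_symm

/-- Alternating composite: `altComp f g m = ⋯ ∘ g ∘ f` with `m` factors, rightmost `f`. -/
def altComp {E : Type*} [AddCommGroup E] [Module ℂ E] (f g : E →ₗ[ℂ] E) : ℕ → (E →ₗ[ℂ] E)
  | 0 => LinearMap.id
  | m + 1 => altComp g f m ∘ₗ f

/-- The "intertwining" part of the Hecke operator: `(φ_w)_w ↦ (A_i^{s_i w} φ_{s_i w})_w`. -/
def heckeA {W : Type*} [Group W] {r : ℕ} (s : Fin r → W)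
    (M : W → Type*) [∀ w, AddCommGroup (M w)] [∀ w, Module ℂ (M w)]
    (A : ∀ (i : Fin r) (w : W), M (s i * w) →ₗ[ℂ] M w) (i : Fin r) :
    (∀ w, M w) →ₗ[ℂ] ∀ w, M w where
  toFun φ w := A i w (φ (s i * w))
  map_add' φ ψ := by funext w; simp
  map_smul' c φ := by funext w; simp

/-- The diagonal operator multiplying the `w`-component by the scalar `c w`. -/
def diagOp {W : Type*} (M : W → Type*) [∀ w, AddCommGroup (M w)] [∀ w, Module ℂ (M w)]
    (c : W → ℂ) : (∀ w, M w) →ₗ[ℂ] ∀ w, M w where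
  toFun φ w := c w • φ w
  map_add' φ ψ := by funext w; simp
  map_smul' t φ := by
    funext w
    simp only [Pi.smul_apply, RingHom.id_apply]
    exact smul_comm _ _ _

/-- The Hecke operator `𝔗_i` on `𝔐 = Π w, M w`:
`(𝔗_i φ)_w = ((1−v)(wz)^{α_i} / (1 − (wz)^{α_i})) φ_w + A_i^{s_i w} (φ_{s_i w})`,
where `(wz)^μ = z(w⁻¹ μ)`. -/
def heckeT {Λ W : Type*} [AddCommGroup Λ] [Group W] {r : ℕ}
    (σ : W →* Λ ≃+ Λ) (s : Fin r → W) (α : Fin r → Λ) (z : Λ → ℂ) (v : ℂ)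
    (M : W → Type*) [∀ w, AddCommGroup (M w)] [∀ w, Module ℂ (M w)]
    (A : ∀ (i : Fin r) (w : W), M (s i * w) →ₗ[ℂ] M w) (i : Fin r) :
    (∀ w, M w) →ₗ[ℂ] ∀ w, M w :=
  diagOp M (fun w => ((1 - v) * z (σ w⁻¹ (α i))) / (1 - z (σ w⁻¹ (α i)))) + heckeA s M A i

lemma one_sub_mul_div_one_sub_eq {K : Type*} [Field K] {a : K} (ha : a ≠ 0) (v : K) :
    (1 - v) * a / (1 - a) = (v - 1) / (1 - a⁻¹) := by
  by_cases ha1 : a = 1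
  · simp [ha1] -- both sides are `0` by the convention `x / 0 = 0`
  have h1a : 1 - a ≠ 0 := sub_ne_zero.mpr (Ne.symm ha1)
  have h1a' : a - 1 ≠ 0 := sub_ne_zero.mpr ha1
  rw [show 1 - a⁻¹ = (a - 1) / a by field_simp]
  field_simp
  ring

lemma addEquiv_map_mul_inv_apply_map {Λ W : Type*} [Add Λ] [Group W] (σ : W →* Λ ≃+ Λ)
    (g w : W) (μ : Λ) : σ (g * w)⁻¹ (σ g μ) = σ w⁻¹ μ := by
  change (σ (g * w)⁻¹ * σ g) μ = σ w⁻¹ μ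
  rw [← map_mul, mul_inv_rev, inv_mul_cancel_right]

section HeckeOperators

variable {W : Type*} (M : W → Type*) [∀ w, AddCommGroup (M w)] [∀ w, Module ℂ (M w)]

@[simp]
lemma diagOp_apply (c : W → ℂ) (φ : ∀ w, M w) (w : W) : diagOp M c φ w = c w • φ w := rfl

lemma diagOp_comp_diagOp (c d : W → ℂ) : diagOp M c ∘ₗ diagOp M d = diagOp M (c * d) := by
  ext φ w
  simp [smul_smul]

lemma diagOp_sub (c d : W → ℂ) : diagOp M (c - d) = diagOp M c - diagOp M d := by
  ext φ w
  simp [sub_smul]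

variable [Group W] {r : ℕ} (s : Fin r → W) (A : ∀ (i : Fin r) (w : W), M (s i * w) →ₗ[ℂ] M w)

@[simp]
lemma heckeA_apply (i : Fin r) (φ : ∀ w, M w) (w : W) :
    heckeA s M A i φ w = A i w (φ (s i * w)) := rfl

lemma diagOp_comp_heckeA {i : Fin r} {c d : W → ℂ} (h : ∀ w, d (s i * w) = c w) :
    diagOp M c ∘ₗ heckeA s M A i = heckeA s M A i ∘ₗ diagOp M d := by
  ext φ w
  simp [h]

lemma diagOp_comp_heckeT_sub_heckeT_comp_diagOp {Λ : Type*} [AddCommGroup Λ]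
    (σ : W →* Λ ≃+ Λ) (α : Fin r → Λ) (z : Λ → ℂ) (v : ℂ) {i : Fin r} {θ θ' : W → ℂ}
    (h : ∀ w, θ' (s i * w) = θ w) :
    diagOp M θ ∘ₗ heckeT σ s α z v M A i - heckeT σ s α z v M A i ∘ₗ diagOp M θ' =
      diagOp M ((fun w => (1 - v) * z (σ w⁻¹ (α i)) / (1 - z (σ w⁻¹ (α i)))) * (θ - θ')) := by
  rw [heckeT, LinearMap.comp_add, LinearMap.add_comp, diagOp_comp_heckeA M s A h,
    diagOp_comp_diagOp, diagOp_comp_diagOp, add_sub_add_right_eq_sub, ← diagOp_sub,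
    mul_comm θ, mul_sub]

end HeckeOperators

theorem heckeT_bernstein_general
    {Λ : Type*} [AddCommGroup Λ]
    {W : Type*} [Group W] {r : ℕ}
    (σ : W →* Λ ≃+ Λ) (s : Fin r → W) (α : Fin r → Λ)
    (z : Λ → ℂ) (hz0 : z 0 = 1) (hzadd : ∀ μ ν, z (μ + ν) = z μ * z ν)
    (v : ℂ)
    (M : W → Type*) [∀ w, AddCommGroup (M w)] [∀ w, Module ℂ (M w)]
    (A : ∀ (i : Fin r) (w : W), M (s i * w) →ₗ[ℂ] M w) :
    -- θ_λ 𝔗_i − 𝔗_i θ_{s_i λ} preserves each summand M_w, acting on it by the scalar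
    -- (v−1)·((wz)^λ − (wz)^{s_i λ}) / (1 − (wz)^{−α_i∨})  (the Bernstein relation)
    ∀ (lam : Λ) (i : Fin r) (φ : ∀ w, M w) (w : W),
      (diagOp M (fun u => z (σ u⁻¹ lam)) ∘ₗ heckeT σ s α z v M A i
        - heckeT σ s α z v M A i ∘ₗ diagOp M (fun u => z (σ u⁻¹ (σ (s i) lam)))) φ w
      = ((v - 1) * (z (σ w⁻¹ lam) - z (σ w⁻¹ (σ (s i) lam))) /
          (1 - z (σ w⁻¹ (-α i)))) • φ w := by
  intro lam i φ w
  let ψ : AddChar Λ ℂ := ⟨z, hz0, hzadd⟩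
  have hθ : ∀ u, z (σ (s i * u)⁻¹ (σ (s i) lam)) = z (σ u⁻¹ lam) := fun u =>
    congrArg z (addEquiv_map_mul_inv_apply_map σ (s i) u lam)
  have hneg : z (σ w⁻¹ (-α i)) = (z (σ w⁻¹ (α i)))⁻¹ :=
    (congrArg z (map_neg _ _)).trans (ψ.map_neg_eq_inv _)
  have hz : z (σ w⁻¹ (α i)) ≠ 0 := (ψ.val_isUnit _).ne_zero
  rw [diagOp_comp_heckeT_sub_heckeT_comp_diagOp M s A σ α z v hθ, diagOp_apply, hneg,
    mul_div_right_comm, ← one_sub_mul_div_one_sub_eq hz]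
  rfl

/-- **Theorem 1.2 of "Hecke Modules from Metaplectic Ice" (Bernstein relation).**
With `θ_λ` acting on the summand `M w` as the scalar `(wz)^λ` (the operator `diagOp`),
the operator `θ_λ 𝔗_i − 𝔗_i θ_{s_i λ}` preserves each summand `M w` and acts on it as
multiplication by `(v−1)·((wz)^λ − (wz)^{s_i λ}) / (1 − (wz)^{−α_i∨})`; in particular the
`𝔗_i` and `θ_λ` satisfy the Bernstein relation of the affine Hecke algebra. -/
theorem heckeT_bernstein
    -- Λ: free abelian group of finite rank
    {Λ : Type*} [AddCommGroup Λ] [Module.Free ℤ Λ] [Module.Finite ℤ Λ]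
    -- W: finite Weyl group acting on Λ
    {W : Type*} [Group W] [Fintype W] {r : ℕ}
    (σ : W →* Λ ≃+ Λ) (s : Fin r → W) (α : Fin r → Λ) (pair : Fin r → Λ →+ ℤ)
    -- Φ: reduced crystallographic root system inside Λ, stable under W
    (Φ : Set Λ) (hΦfin : Φ.Finite) (hΦneg : ∀ μ ∈ Φ, -μ ∈ Φ)
    (hΦW : ∀ (w : W), ∀ μ ∈ Φ, σ w μ ∈ Φ)
    (hΦred : ∀ μ ∈ Φ, (2 : ℤ) • μ ∉ Φ)
    (hα : ∀ i, α i ∈ Φ) (hpair : ∀ i, pair i (α i) = 2)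
    (hrefl : ∀ (i : Fin r) (μ : Λ), σ (s i) μ = μ - pair i μ • α i)
    (hs2 : ∀ i, s i * s i = 1)
    (hgen : Subgroup.closure (Set.range s) = ⊤)
    -- z : a regular element of T̂(ℂ) = Hom(Λ, ℂˣ)
    (z : Λ → ℂ) (hz0 : z 0 = 1) (hzadd : ∀ μ ν, z (μ + ν) = z μ * z ν)
    (hzne : ∀ μ, z μ ≠ 0) (hzreg : ∀ μ ∈ Φ, z μ ≠ 1)
    (v : ℂ)
    -- the data of Assumptions 1.1
    (M : W → Type*) [∀ w, AddCommGroup (M w)] [∀ w, Module ℂ (M w)]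
    (A : ∀ (i : Fin r) (w : W), M (s i * w) →ₗ[ℂ] M w)
    -- (a): A_i^{s_i w} ∘ A_i^w is the scalar (6) of the paper
    (ha : ∀ (i : Fin r) (w : W) (φ : ∀ u, M u),
      heckeA s M A i (heckeA s M A i φ) w =
        (((1 - v * z (σ w⁻¹ (α i))) * (1 - v * z (σ w⁻¹ (-α i)))) /
          ((1 - z (σ w⁻¹ (α i))) * (1 - z (σ w⁻¹ (-α i))))) • φ w)
    -- (b): the braid relations (7) of the paper
    (hbraid : ∀ i j : Fin r, i ≠ j →
      altComp (heckeA s M A i) (heckeA s M A j) (orderOf (s i * s j)) =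
        altComp (heckeA s M A j) (heckeA s M A i) (orderOf (s i * s j))) :
    -- θ_λ 𝔗_i − 𝔗_i θ_{s_i λ} preserves each summand M_w, acting on it by the scalar
    -- (v−1)·((wz)^λ − (wz)^{s_i λ}) / (1 − (wz)^{−α_i∨})  (the Bernstein relation)
    ∀ (lam : Λ) (i : Fin r) (φ : ∀ w, M w) (w : W),
      (diagOp M (fun u => z (σ u⁻¹ lam)) ∘ₗ heckeT σ s α z v M A i
        - heckeT σ s α z v M A i ∘ₗ diagOp M (fun u => z (σ u⁻¹ (σ (s i) lam)))) φ w
      = ((v - 1) * (z (σ w⁻¹ lam) - z (σ w⁻¹ (σ (s i) lam))) /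
          (1 - z (σ w⁻¹ (-α i)))) • φ w :=
  heckeT_bernstein_general σ s α z hz0 hzadd v M A
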